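/- There exists an absolute constant c > 0 such that for every n, every f : {0,1}^n → [-1,1], and every coordinate k ∈ [n] with I_k(f) > 0, one has Σ_{i ≠ k} f̂({i,k})² ≤ c · I_k(f)² · log(e / I_k(f)). -/
import Mathlib


open Finset

/-- Expectation with respect to the uniform measure on `{0,1}^n`. -/
noncomputable def expect (n : ℕ) (f : (Fin n → Bool) → ℝ) : ℝ :=
  (∑ x : Fin n → Bool, f x) / 2 ^ n

/-- The Fourier-Walsh character `u_S`. -/
noncomputable def chi (n : ℕ) (S : Finset (Fin n)) (x : Fin n → Bool) : ℝ :=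
  ∏ i ∈ S, (if x i then (-1 : ℝ) else 1)

/-- Fourier-Walsh coefficient `f̂(S)`. -/
noncomputable def coef (n : ℕ) (f : (Fin n → Bool) → ℝ) (S : Finset (Fin n)) : ℝ :=
  expect n (fun x => f x * chi n S x)

/-- `x ⊕ e_k`: flip the k-th coordinate. -/
def flipBit (n : ℕ) (x : Fin n → Bool) (k : Fin n) : Fin n → Bool :=
  Function.update x k (!x k)

/-- Influence of coordinate `k` on `f`: `I_k(f) = E|f(x) − f(x ⊕ e_k)|`. -/
noncomputable def infl (n : ℕ) (f : (Fin n → Bool) → ℝ) (k : Fin n) : ℝ :=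
  expect n (fun x => |f x - f (flipBit n x k)|)

set_option maxHeartbeats 1000000

lemma expect_mono {n : ℕ} {f g : (Fin n → Bool) → ℝ} (h : ∀ x, f x ≤ g x) :
    expect n f ≤ expect n g := by
  unfold _root_.expect
  apply div_le_div_of_nonneg_right ?_ (by positivity)
  exact Finset.sum_le_sum fun x _ => h x

lemma expect_const (n : ℕ) (c : ℝ) : expect n (fun _ => c) = c := by
  unfold _root_.expect
  rw [Finset.sum_const]
  simp [Fintype.card_fun]

lemma expect_add (n : ℕ) (f g : (Fin n → Bool) → ℝ) :
    expect n (fun x => f x + g x) = expect n f + expect n g := by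
  unfold _root_.expect; rw [Finset.sum_add_distrib]; ring

lemma expect_const_mul (n : ℕ) (c : ℝ) (f : (Fin n → Bool) → ℝ) :
    expect n (fun x => c * f x) = c * expect n f := by
  unfold _root_.expect; rw [← Finset.mul_sum]; ring

lemma expect_sum {ι : Type*} (n : ℕ) (s : Finset ι) (f : ι → (Fin n → Bool) → ℝ) :
    expect n (fun x => ∑ i ∈ s, f i x) = ∑ i ∈ s, expect n (f i) := by
  unfold _root_.expect
  rw [Finset.sum_comm, Finset.sum_div]

lemma expect_nonneg {n : ℕ} {f : (Fin n → Bool) → ℝ} (h : ∀ x, 0 ≤ f x) :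
    0 ≤ expect n f := by
  have := expect_mono (n := n) (f := fun _ => (0:ℝ)) (g := f) h
  rwa [expect_const] at this
lemma chi_pair {n : ℕ} {i k : Fin n} (h : i ≠ k) (x : Fin n → Bool) :
    chi n {i, k} x = (if x i then (-1:ℝ) else 1) * (if x k then (-1:ℝ) else 1) := by
  unfold chi
  rw [Finset.prod_pair h]

lemma flipBit_apply_ne {n : ℕ} (x : Fin n → Bool) {i k : Fin n} (h : i ≠ k) :
    flipBit n x k i = x i := by
  unfold flipBit
  rw [Function.update_of_ne h]

lemma flipBit_apply_self {n : ℕ} (x : Fin n → Bool) (k : Fin n) :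
    flipBit n x k k = !x k := by
  unfold flipBit; simp

lemma chi_pair_flip {n : ℕ} {i k : Fin n} (h : i ≠ k) (x : Fin n → Bool) :
    chi n {i, k} (flipBit n x k) = - chi n {i, k} x := by
  rw [chi_pair h, chi_pair h, flipBit_apply_ne x h, flipBit_apply_self]
  cases x k <;> cases x i <;> norm_num

lemma flipBit_flip {n : ℕ} (x : Fin n → Bool) (k : Fin n) :
    flipBit n (flipBit n x k) k = x := by
  funext i
  rcases eq_or_ne i k with rfl | h
  · rw [flipBit_apply_self, flipBit_apply_self, Bool.not_not]
  · rw [flipBit_apply_ne _ h, flipBit_apply_ne _ h]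

lemma flipBit_involutive {n : ℕ} (k : Fin n) :
    Function.Involutive (fun x => flipBit n x k) := fun x => flipBit_flip x k

lemma expect_comp_flip {n : ℕ} (k : Fin n) (F : (Fin n → Bool) → ℝ) :
    expect n (fun x => F (flipBit n x k)) = expect n F := by
  unfold _root_.expect
  congr 1
  exact Fintype.sum_bijective _ (flipBit_involutive k).bijective _ _ (fun x => rfl)

lemma coef_flip {n : ℕ} (f : (Fin n → Bool) → ℝ) {i k : Fin n} (h : i ≠ k) :
    expect n (fun x => f (flipBit n x k) * chi n {i, k} x) = - coef n f {i, k} := by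
  set G : (Fin n → Bool) → ℝ := fun y => f y * chi n {i,k} (flipBit n y k) with hG
  have h1 : ∀ x, f (flipBit n x k) * chi n {i, k} x = G (flipBit n x k) := by
    intro x
    rw [hG]
    simp only
    rw [flipBit_flip]
  have h2 : expect n (fun x => f (flipBit n x k) * chi n {i, k} x) = expect n G := by
    rw [show (fun x => f (flipBit n x k) * chi n {i, k} x) = (fun x => G (flipBit n x k)) from funext h1]
    exact expect_comp_flip k G
  rw [h2]
  have h3 : G = fun y => (-1 : ℝ) * (f y * chi n {i,k} y) := by
    funext y
    rw [hG]
    simp only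
    rw [chi_pair_flip h]
    ring
  rw [h3, expect_const_mul]
  unfold coef
  ring

lemma key_identity {n : ℕ} (f : (Fin n → Bool) → ℝ) (k : Fin n) :
    expect n (fun x => (f x - f (flipBit n x k)) *
      (∑ i ∈ univ.erase k, coef n f {i, k} * chi n {i, k} x)) =
    2 * ∑ i ∈ univ.erase k, (coef n f {i, k}) ^ 2 := by
  have : ∀ x, (f x - f (flipBit n x k)) *
      (∑ i ∈ univ.erase k, coef n f {i, k} * chi n {i, k} x)
      = ∑ i ∈ univ.erase k, coef n f {i, k} *
          (f x * chi n {i,k} x - f (flipBit n x k) * chi n {i,k} x) := by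
    intro x
    rw [Finset.mul_sum]
    apply Finset.sum_congr rfl
    intro i _
    ring
  calc expect n _ = ∑ i ∈ univ.erase k, expect n (fun x => coef n f {i, k} *
          (f x * chi n {i,k} x - f (flipBit n x k) * chi n {i,k} x)) := by
        rw [← expect_sum]; congr 1; funext x; exact this x
    _ = 2 * ∑ i ∈ univ.erase k, (coef n f {i, k}) ^ 2 := by
        rw [Finset.mul_sum]
        apply Finset.sum_congr rfl
        intro i hi
        have hik : i ≠ k := (Finset.mem_erase.1 hi).1
        rw [expect_const_mul]
        have : expect n (fun x => f x * chi n {i,k} x - f (flipBit n x k) * chi n {i,k} x)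
            = coef n f {i,k} - (- coef n f {i,k}) := by
          have e1 : expect n (fun x => f x * chi n {i,k} x - f (flipBit n x k) * chi n {i,k} x)
              = expect n (fun x => f x * chi n {i,k} x + (-1) * (f (flipBit n x k) * chi n {i,k} x)) := by
            congr 1; funext x; ring
          rw [e1, expect_add, expect_const_mul, coef_flip f hik]
          unfold coef
          ring
        rw [this]
        ring

lemma mgf {n : ℕ} (k : Fin n) (a : Fin n → ℝ) (t : ℝ) :
    expect n (fun x => Real.exp (t * ∑ i ∈ univ.erase k, a i * chi n {i,k} x))
      ≤ Real.exp (t^2 * (∑ i ∈ univ.erase k, (a i)^2) / 2) := by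
  set e : Bool → ℝ := fun b => if b then (-1:ℝ) else 1 with he
  have hsub : ∀ (i : Fin n), i ∈ univ.erase k ↔ i ≠ k := by
    intro i; simp [Finset.mem_erase]
  -- step 1: pointwise product form, as product over the subtype
  have step1 : ∀ x : Fin n → Bool,
      Real.exp (t * ∑ i ∈ univ.erase k, a i * chi n {i,k} x)
        = ∏ j : {j : Fin n // j ≠ k}, Real.exp (t * (a j * (e (x j) * e (x k)))) := by
    intro x
    rw [Finset.mul_sum, Real.exp_sum]
    rw [← Finset.prod_subtype (univ.erase k) hsub
        (fun i => Real.exp (t * (a i * (e (x i) * e (x k)))))]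
    apply Finset.prod_congr rfl
    intro i hi
    rw [chi_pair ((Finset.mem_erase.1 hi).1) x]
  -- step 2: change of variables and factorization of the sum
  have step2 : ∑ x : Fin n → Bool,
      ∏ j : {j : Fin n // j ≠ k}, Real.exp (t * (a j * (e (x j) * e (x k))))
      = ∑ b : Bool, ∏ j : {j : Fin n // j ≠ k},
          ∑ c : Bool, Real.exp (t * (a j * (e c * e b))) := by
    rw [Fintype.sum_equiv (Equiv.funSplitAt k Bool)
      (fun x => ∏ j : {j : Fin n // j ≠ k}, Real.exp (t * (a j * (e (x j) * e (x k)))))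
      (fun p => ∏ j : {j : Fin n // j ≠ k}, Real.exp (t * (a j * (e (p.2 j) * e p.1))))
      (fun x => by simp [Equiv.funSplitAt_apply])]
    rw [Fintype.sum_prod_type]
    apply Finset.sum_congr rfl
    intro b _
    rw [Finset.prod_univ_sum]
    rw [← Fintype.piFinset_univ]
  -- step 3: cosh bound per factor
  have step3 : ∀ (b : Bool) (j : {j : Fin n // j ≠ k}),
      (∑ c : Bool, Real.exp (t * (a j * (e c * e b))))
        ≤ 2 * Real.exp (t^2 * (a j)^2 / 2) := by
    intro b j
    rw [Fintype.sum_bool]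
    have hc : ∀ u : ℝ, Real.exp u + Real.exp (-u) ≤ 2 * Real.exp (u^2 / 2) := by
      intro u
      have h1 : Real.exp u + Real.exp (-u) = 2 * Real.cosh u := by
        rw [Real.cosh_eq]; ring
      rw [h1]
      have := Real.cosh_le_exp_half_sq u
      linarith
    have hb := hc (t * a ↑j)
    rw [show (t * a ↑j)^2/2 = t^2 * (a ↑j)^2/2 by ring] at hb
    cases b
    · have e1 : t * (a ↑j * (e true * e false)) = -(t * a ↑j) := by norm_num [he]
      have e2 : t * (a ↑j * (e false * e false)) = t * a ↑j := by norm_num [he]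
      rw [e1, e2]
      linarith [hb]
    · have e1 : t * (a ↑j * (e true * e true)) = t * a ↑j := by norm_num [he]
      have e2 : t * (a ↑j * (e false * e true)) = -(t * a ↑j) := by norm_num [he]
      rw [e1, e2]
      linarith [hb]
  -- assemble
  have hn : 1 ≤ n := k.pos
  have cardeq : Fintype.card {j : Fin n // j ≠ k} = n - 1 := by
    have : Fintype.card {j : Fin n // ¬ (j = k)} = Fintype.card (Fin n) - Fintype.card {j : Fin n // j = k} :=
      Fintype.card_subtype_compl _
    simpa using this
  set S := ∑ i ∈ univ.erase k, (a i)^2 with hS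
  have sumsq : ∑ j : {j : Fin n // j ≠ k}, (a ↑j)^2 = S := by
    rw [hS, Finset.sum_subtype (univ.erase k) hsub (fun i => (a i)^2)]
  have per_b : ∀ b : Bool,
      (∏ j : {j : Fin n // j ≠ k}, ∑ c : Bool, Real.exp (t * (a ↑j * (e c * e b))))
        ≤ 2^(n-1) * Real.exp (t^2 * S / 2) := by
    intro b
    calc (∏ j : {j : Fin n // j ≠ k}, ∑ c : Bool, Real.exp (t * (a ↑j * (e c * e b))))
        ≤ ∏ j : {j : Fin n // j ≠ k}, 2 * Real.exp (t^2 * (a ↑j)^2 / 2) := by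
          apply Finset.prod_le_prod
          · intro j _
            apply Finset.sum_nonneg
            intro c _
            positivity
          · intro j _
            exact step3 b j
      _ = 2^(n-1) * Real.exp (t^2 * S / 2) := by
          rw [Finset.prod_mul_distrib, Finset.prod_const, ← Real.exp_sum]
          congr 1
          · rw [Finset.card_univ, cardeq]
          · rw [← Finset.sum_div, ← Finset.mul_sum, sumsq]
  have total : ∑ x : Fin n → Bool,
      Real.exp (t * ∑ i ∈ univ.erase k, a i * chi n {i,k} x)
        ≤ 2^n * Real.exp (t^2 * S / 2) := by
    calc ∑ x : Fin n → Bool, Real.exp (t * ∑ i ∈ univ.erase k, a i * chi n {i,k} x)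
        = ∑ b : Bool, ∏ j : {j : Fin n // j ≠ k},
            ∑ c : Bool, Real.exp (t * (a ↑j * (e c * e b))) := by
          rw [← step2]
          exact Finset.sum_congr rfl (fun x _ => step1 x)
      _ ≤ ∑ _b : Bool, 2^(n-1) * Real.exp (t^2 * S / 2) :=
          Finset.sum_le_sum (fun b _ => per_b b)
      _ = 2^n * Real.exp (t^2 * S / 2) := by
          have h2 : (2:ℝ) * 2^(n-1) = 2^n := by
            rw [← pow_succ']
            congr 1
            omega
          rw [Fintype.sum_bool, ← two_mul, ← mul_assoc, h2]
  unfold _root_.expect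
  rw [div_le_iff₀ (by positivity)]
  calc ∑ x : Fin n → Bool, Real.exp (t * ∑ i ∈ univ.erase k, a i * chi n {i,k} x)
      ≤ 2^n * Real.exp (t^2 * S / 2) := total
    _ = Real.exp (t^2 * S / 2) * 2^n := by ring

lemma pointwise_tail (g L M t : ℝ) (hg : |g| ≤ 2) (ht : 0 < t) (hM : 0 ≤ M) :
    g * L ≤ M * |g| + (2 / (t * Real.exp 1)) *
      (Real.exp (t * (L - M)) + Real.exp (t * (-L - M))) := by
  have hte : 0 < t * Real.exp 1 := by positivity
  have hexp : 0 ≤ Real.exp (t * (L - M)) + Real.exp (t * (-L - M)) := by positivity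
  have hgL : g * L ≤ |g| * |L| := by
    calc g * L ≤ |g * L| := le_abs_self _
      _ = |g| * |L| := abs_mul g L
  rcases le_or_gt |L| M with h | h
  · have h1 : |g| * |L| ≤ M * |g| := by
      rw [mul_comm]
      exact mul_le_mul_of_nonneg_right h (abs_nonneg g)
    have h2 : 0 ≤ (2 / (t * Real.exp 1)) * (Real.exp (t * (L - M)) + Real.exp (t * (-L - M))) := by
      positivity
    linarith
  · have hv : 0 < |L| - M := by linarith
    have key : |L| - M ≤ (1 / (t * Real.exp 1)) * Real.exp (t * (|L| - M)) := by
      have h1 := Real.add_one_le_exp (t * (|L| - M) - 1)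
      have h2 : Real.exp (t * (|L| - M) - 1) = Real.exp (t * (|L| - M)) / Real.exp 1 := by
        rw [Real.exp_sub]
      rw [h2] at h1
      rw [div_mul_eq_mul_div, le_div_iff₀ hte, one_mul]
      have he1 : (0:ℝ) < Real.exp 1 := Real.exp_pos 1
      have h3 : t * (|L| - M) ≤ Real.exp (t * (|L| - M)) / Real.exp 1 := by linarith
      rw [le_div_iff₀ he1] at h3
      nlinarith [h3]
    have habs : Real.exp (t * (|L| - M)) ≤ Real.exp (t * (L - M)) + Real.exp (t * (-L - M)) := by
      rcases abs_cases L with ⟨h1, _⟩ | ⟨h1, _⟩ <;> rw [h1]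
      · linarith [Real.exp_pos (t * (-L - M)), le_refl (Real.exp (t * (L - M)))]
      · linarith [Real.exp_pos (t * (L - M))]
    have step : |g| * |L| ≤ M * |g| + 2 * (|L| - M) := by
      nlinarith [abs_nonneg g]
    have tail : 2 * (|L| - M) ≤ (2 / (t * Real.exp 1)) *
        (Real.exp (t * (L - M)) + Real.exp (t * (-L - M))) := by
      have := mul_le_mul_of_nonneg_left key (by norm_num : (0:ℝ) ≤ 2)
      have h3 : (2:ℝ) * ((1 / (t * Real.exp 1)) * Real.exp (t * (|L| - M)))
          = (2 / (t * Real.exp 1)) * Real.exp (t * (|L| - M)) := by ring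
      rw [h3] at this
      calc 2 * (|L| - M) ≤ (2 / (t * Real.exp 1)) * Real.exp (t * (|L| - M)) := this
        _ ≤ (2 / (t * Real.exp 1)) * (Real.exp (t * (L - M)) + Real.exp (t * (-L - M))) := by
            apply mul_le_mul_of_nonneg_left habs
            positivity
    linarith

lemma estimate {n : ℕ} (f : (Fin n → Bool) → ℝ) (k : Fin n)
    (hf : ∀ x, f x ∈ Set.Icc (-1 : ℝ) 1) (M t : ℝ) (ht : 0 < t) (hM : 0 ≤ M) :
    2 * (∑ i ∈ univ.erase k, (coef n f {i,k})^2) ≤ M * infl n f k +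
      (4 / (t * Real.exp 1)) *
        Real.exp (t^2 * (∑ i ∈ univ.erase k, (coef n f {i,k})^2) / 2 - t * M) := by
  set S := ∑ i ∈ univ.erase k, (coef n f {i,k})^2 with hS
  set Lf : (Fin n → Bool) → ℝ := fun x => ∑ i ∈ univ.erase k, coef n f {i,k} * chi n {i,k} x with hLf
  have hg2 : ∀ x, |f x - f (flipBit n x k)| ≤ 2 := by
    intro x
    obtain ⟨h1, h2⟩ := hf x
    obtain ⟨h3, h4⟩ := hf (flipBit n x k)
    rw [abs_le]
    constructor <;> linarith
  have hkey : expect n (fun x => (f x - f (flipBit n x k)) * Lf x) = 2 * S := key_identity f k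
  have hmgf : ∀ u : ℝ, expect n (fun x => Real.exp (u * Lf x)) ≤ Real.exp (u^2 * S / 2) :=
    fun u => mgf k (fun i => coef n f {i,k}) u
  have hc : 0 < t * Real.exp 1 := by positivity
  have step : expect n (fun x => (f x - f (flipBit n x k)) * Lf x)
      ≤ expect n (fun x => M * |f x - f (flipBit n x k)| +
          (2 / (t * Real.exp 1)) *
            (Real.exp (t * (Lf x - M)) + Real.exp (t * (-Lf x - M)))) :=
    expect_mono (fun x => pointwise_tail _ _ M t (hg2 x) ht hM)
  have e1 : expect n (fun x => Real.exp (t * (Lf x - M))) ≤ Real.exp (t^2 * S / 2 - t * M) := by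
    have hfe : (fun x => Real.exp (t * (Lf x - M)))
        = fun x => Real.exp (-(t * M)) * Real.exp (t * Lf x) := by
      funext x
      rw [← Real.exp_add]
      congr 1
      ring
    rw [hfe, expect_const_mul]
    calc Real.exp (-(t * M)) * expect n (fun x => Real.exp (t * Lf x))
        ≤ Real.exp (-(t * M)) * Real.exp (t^2 * S / 2) :=
          mul_le_mul_of_nonneg_left (hmgf t) (Real.exp_pos _).le
      _ = Real.exp (t^2 * S / 2 - t * M) := by rw [← Real.exp_add]; congr 1; ring
  have e2 : expect n (fun x => Real.exp (t * (-Lf x - M))) ≤ Real.exp (t^2 * S / 2 - t * M) := by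
    have hfe : (fun x => Real.exp (t * (-Lf x - M)))
        = fun x => Real.exp (-(t * M)) * Real.exp ((-t) * Lf x) := by
      funext x
      rw [← Real.exp_add]
      congr 1
      ring
    rw [hfe, expect_const_mul]
    calc Real.exp (-(t * M)) * expect n (fun x => Real.exp ((-t) * Lf x))
        ≤ Real.exp (-(t * M)) * Real.exp ((-t)^2 * S / 2) :=
          mul_le_mul_of_nonneg_left (hmgf (-t)) (Real.exp_pos _).le
      _ = Real.exp (t^2 * S / 2 - t * M) := by rw [← Real.exp_add]; congr 1; ring
  have rhs_eq : expect n (fun x => M * |f x - f (flipBit n x k)| +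
      (2 / (t * Real.exp 1)) *
        (Real.exp (t * (Lf x - M)) + Real.exp (t * (-Lf x - M))))
      = M * infl n f k + (2 / (t * Real.exp 1)) *
          (expect n (fun x => Real.exp (t * (Lf x - M)))
            + expect n (fun x => Real.exp (t * (-Lf x - M)))) := by
    rw [expect_add, expect_const_mul, expect_const_mul, expect_add]
    rfl
  calc 2 * S = expect n (fun x => (f x - f (flipBit n x k)) * Lf x) := hkey.symm
    _ ≤ _ := step
    _ = M * infl n f k + (2 / (t * Real.exp 1)) *
          (expect n (fun x => Real.exp (t * (Lf x - M)))
            + expect n (fun x => Real.exp (t * (-Lf x - M)))) := rhs_eq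
    _ ≤ M * infl n f k + (2 / (t * Real.exp 1)) *
          (Real.exp (t^2 * S / 2 - t * M) + Real.exp (t^2 * S / 2 - t * M)) := by
        have := mul_le_mul_of_nonneg_left (add_le_add e1 e2) (le_of_lt (by positivity : (0:ℝ) < 2 / (t * Real.exp 1)))
        linarith
    _ = M * infl n f k + (4 / (t * Real.exp 1)) * Real.exp (t^2 * S / 2 - t * M) := by ring

/-- Second-level corollary of the first-level bound: for `f : {0,1}^n → [-1,1]`
and a coordinate `k` with `I_k(f) > 0`,
`Σ_{i ≠ k} f̂({i,k})² ≤ c·I_k(f)²·log(e/I_k(f))`. -/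
theorem second_level_bound :
    ∃ c : ℝ, 0 < c ∧ ∀ (n : ℕ) (f : (Fin n → Bool) → ℝ) (k : Fin n),
      (∀ x, f x ∈ Set.Icc (-1 : ℝ) 1) → 0 < infl n f k →
      ∑ i ∈ Finset.univ.erase k, (coef n f {i, k}) ^ 2 ≤
        c * (infl n f k) ^ 2 * Real.log (Real.exp 1 / infl n f k) := by
  refine ⟨1000, by norm_num, ?_⟩
  intro n f k hf hI
  set I := infl n f k with hIdef
  set S := ∑ i ∈ Finset.univ.erase k, (coef n f {i, k}) ^ 2 with hS
  have hSnn : 0 ≤ S := Finset.sum_nonneg fun i _ => sq_nonneg _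
  -- I ≤ 2
  have hg2 : ∀ x, |f x - f (flipBit n x k)| ≤ 2 := by
    intro x
    obtain ⟨h1, h2⟩ := hf x
    obtain ⟨h3, h4⟩ := hf (flipBit n x k)
    rw [abs_le]; constructor <;> linarith
  have hI2 : I ≤ 2 := by
    have h := expect_mono (n := n) (f := fun x => |f x - f (flipBit n x k)|)
      (g := fun _ => (2:ℝ)) hg2
    rw [expect_const] at h
    exact h
  -- log facts
  have hlogeq : Real.log (Real.exp 1 / I) = 1 - Real.log I := by
    rw [Real.log_div (Real.exp_ne_zero 1) (ne_of_gt hI), Real.log_exp]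
  have hlogI2 : Real.log I ≤ Real.log 2 := Real.log_le_log hI hI2
  have hlog2 : Real.log 2 < 0.6931471808 := Real.log_two_lt_d9
  have hlogpos : (0.3 : ℝ) ≤ Real.log (Real.exp 1 / I) := by
    rw [hlogeq]; linarith
  rcases eq_or_lt_of_le hSnn with hS0 | hSpos
  · rw [← hS0]
    have : (0:ℝ) ≤ 1000 * I^2 * Real.log (Real.exp 1 / I) := by
      apply mul_nonneg (mul_nonneg (by norm_num) (sq_nonneg I))
      linarith
    linarith
  · set σ := Real.sqrt S with hσdef
    have hσpos : 0 < σ := Real.sqrt_pos.2 hSpos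
    have hσ2 : σ^2 = S := Real.sq_sqrt hSnn
    have hargpos : 1 ≤ Real.log (8/σ) + σ := by
      have h8 : Real.log (8/σ) = Real.log 8 - Real.log σ :=
        Real.log_div (by norm_num) (ne_of_gt hσpos)
      have hls := Real.log_le_sub_one_of_pos hσpos
      have h8nn : 0 ≤ Real.log 8 := Real.log_nonneg (by norm_num)
      linarith
    have hargpos' : 0 < Real.log (8/σ) + σ := by linarith
    set m := 2 * Real.sqrt (Real.log (8/σ) + σ) with hmdef
    have hm2 : m^2 = 4 * (Real.log (8/σ) + σ) := by
      rw [hmdef, mul_pow, Real.sq_sqrt hargpos'.le]; ring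
    have hmpos : 0 < m := by
      rw [hmdef]; positivity
    have hm1 : 2 ≤ m := by
      rw [hmdef]
      have := Real.sqrt_le_sqrt hargpos
      rw [Real.sqrt_one] at this
      linarith
    set t := m / σ with htdef
    have ht : 0 < t := div_pos hmpos hσpos
    set M := σ * m with hMdef
    have hM : 0 ≤ M := by positivity
    have est := estimate f k hf M t ht hM
    rw [← hS, ← hIdef] at est
    -- exponent simplification
    have hexp : t^2 * S / 2 - t * M = -(m^2/2) := by
      rw [htdef, hMdef, ← hσ2]
      field_simp
      ring
    rw [hexp] at est
    -- tail bound: (4 / (t * e)) * exp (-(m^2/2)) ≤ S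
    have hden : 0 < 16 * m * Real.exp 1 :=
      mul_pos (mul_pos (by norm_num : (0:ℝ) < 16) hmpos) (Real.exp_pos 1)
    have htail : (4 / (t * Real.exp 1)) * Real.exp (-(m^2/2)) ≤ S := by
      have hev : Real.exp (-(m^2/2)) = (σ/8) * (σ/8) * Real.exp (-(2*σ)) := by
        have hy : Real.exp (Real.log (8/σ)) = 8/σ := Real.exp_log (by positivity)
        have : -(m^2/2) = -Real.log (8/σ) + (-Real.log (8/σ) + -(2*σ)) := by
          rw [hm2]; ring
        rw [this, Real.exp_add, Real.exp_add, Real.exp_neg, Real.exp_neg, hy]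
        rw [inv_div]
        ring
      have hse : σ * Real.exp (-(2*σ)) ≤ 1 := by
        have h1 : 2*σ + 1 ≤ Real.exp (2*σ) := Real.add_one_le_exp (2*σ)
        have h2 : σ ≤ Real.exp (2*σ) := by linarith
        rw [Real.exp_neg]
        rw [mul_inv_le_iff₀ (Real.exp_pos _)]
        linarith
      have hte : t * Real.exp 1 = m * Real.exp 1 / σ := by
        rw [htdef]; ring
      have e1 : (4 / (t * Real.exp 1)) * Real.exp (-(m^2/2))
          = (σ * Real.exp (-(2*σ))) * (σ^2 / (16 * m * Real.exp 1)) := by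
        rw [hev, hte]
        rw [div_div_eq_mul_div]
        field_simp
        ring
      rw [e1, ← hσ2]
      have hbig : (1:ℝ) ≤ 16 * m * Real.exp 1 := by
        have he1 : (2.7:ℝ) < Real.exp 1 := by
          have := Real.exp_one_gt_d9
          linarith
        have hme : 2 * 2.7 ≤ m * Real.exp 1 :=
          mul_le_mul hm1 he1.le (by norm_num) (by linarith)
        linarith
      have h3 : σ^2 / (16 * m * Real.exp 1) ≤ σ^2 := div_le_self (sq_nonneg σ) hbig
      calc (σ * Real.exp (-(2*σ))) * (σ^2 / (16 * m * Real.exp 1))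
          ≤ 1 * (σ^2 / (16 * m * Real.exp 1)) := by
            apply mul_le_mul_of_nonneg_right hse
            positivity
        _ = σ^2 / (16 * m * Real.exp 1) := one_mul _
        _ ≤ σ^2 := h3
    -- conclude S ≤ σ m I
    have hSMI : S ≤ σ * m * I := by
      rw [hMdef] at est
      linarith
    have hσmI : σ ≤ m * I := by
      have : σ * σ ≤ σ * (m * I) := by
        rw [← hσ2] at hSMI
        nlinarith
      exact le_of_mul_le_mul_left this hσpos
    have hσ2mI : σ^2 ≤ m^2 * I^2 := by
      have h0 : 0 ≤ m * I := by positivity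
      nlinarith [hσpos.le]
    rw [hm2] at hσ2mI
    -- σ² ≤ 4 (log(8/σ) + σ) I²
    rcases lt_or_ge σ (8 * I^2) with hcase | hcase
    · -- easy case: S ≤ 64 I⁴ ≤ 256 I²
      have hI4 : I^2 ≤ 4 := by nlinarith
      have hs64 : S < 64 * (I^2 * I^2) := by
        rw [← hσ2]
        have := mul_self_lt_mul_self hσpos.le hcase
        calc σ^2 = σ * σ := sq σ
          _ < (8 * I^2) * (8 * I^2) := this
          _ = 64 * (I^2 * I^2) := by ring
      have h256 : S ≤ 256 * I^2 := by nlinarith [sq_nonneg I]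
      have hfin : 256 * I^2 ≤ 1000 * I^2 * Real.log (Real.exp 1 / I) := by
        calc 256 * I^2 = I^2 * 256 := by ring
          _ ≤ I^2 * (1000 * Real.log (Real.exp 1 / I)) :=
              mul_le_mul_of_nonneg_left (by linarith) (sq_nonneg I)
          _ = 1000 * I^2 * Real.log (Real.exp 1 / I) := by ring
      linarith
    · -- main case
      have hhalf : σ^2 ≤ 8 * I^2 * Real.log (8/σ) := by
        have hp : 8 * I^2 * σ ≤ σ * σ := by
          have := mul_le_mul_of_nonneg_right hcase hσpos.le
          linarith
        have hsq : σ * σ = σ^2 := (sq σ).symm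
        have h1 : 4 * I^2 * σ ≤ σ^2 / 2 := by linarith
        linarith [hσ2mI]
      rcases le_or_gt σ I with hσI | hσI
      · have hSI : S ≤ I^2 := by
          rw [← hσ2]
          exact pow_le_pow_left₀ hσpos.le hσI 2
        have h2 : I^2 ≤ 1000 * I^2 * Real.log (Real.exp 1 / I) := by
          calc I^2 = I^2 * 1 := (mul_one _).symm
            _ ≤ I^2 * (1000 * Real.log (Real.exp 1 / I)) :=
                mul_le_mul_of_nonneg_left (by linarith) (sq_nonneg I)
            _ = 1000 * I^2 * Real.log (Real.exp 1 / I) := by ring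
        linarith
      · have hlogmono : Real.log (8/σ) ≤ Real.log (8/I) := by
          apply Real.log_le_log (by positivity)
          apply div_le_div_of_nonneg_left (by norm_num) hI hσI.le
        have hlog8 : Real.log (8/I) = Real.log 8 - Real.log I :=
          Real.log_div (by norm_num) (ne_of_gt hI)
        have hl8 : Real.log 8 = 3 * Real.log 2 := by
          rw [show (8:ℝ) = 2^3 by norm_num, Real.log_pow]
          push_cast; ring
        have hfactor : 8 * (Real.log 8 - Real.log I) ≤ 1000 * (1 - Real.log I) := by
          rw [hl8]
          linarith
        have hfin : S ≤ 8 * I^2 * Real.log (8/I) := by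
          rw [← hσ2]
          calc σ^2 ≤ 8 * I^2 * Real.log (8/σ) := hhalf
            _ ≤ 8 * I^2 * Real.log (8/I) := by
                apply mul_le_mul_of_nonneg_left hlogmono
                positivity
        rw [hlogeq]
        calc S ≤ 8 * I^2 * Real.log (8/I) := hfin
          _ = I^2 * (8 * (Real.log 8 - Real.log I)) := by rw [hlog8]; ring
          _ ≤ I^2 * (1000 * (1 - Real.log I)) :=
              mul_le_mul_of_nonneg_left hfactor (sq_nonneg I)
          _ = 1000 * I^2 * (1 - Real.log I) := by ring
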